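/- arXiv:2506.16212 — 4 statements merged into one kernel-verified Lean document; each statement's English description precedes it below -/
import Mathlib

section
/- If f ∈ 𝓡 with f'(z) = 1 + Σ cₙ zⁿ, then the third Hankel determinant of inverse coefficients satisfies H₃(1)(f⁻¹) = (1/8640)·(−540c₁⁴c₂ − 432c₁²c₄ + 720c₁²c₂² + 576c₂c₄ − 540c₃² + 720c₁c₂c₃ + 135c₁⁶ − 640c₂³). -/
/-!
Differentiating `f (g w) = w` five times gives the Faà di Bruno relations between the
derivatives of `f` at `g 0 = 0` and those of `g` at `0`. Since `f⁽ᵏ⁺¹⁾(0) = k! cₖ` and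
`g⁽ᵏ⁾(0) = k! Aₖ`, these relations are triangular in `A₁, …, A₅` and determine them as
polynomials in `c₁, …, c₄`; the Hankel determinant is then a polynomial identity.
-/

open Metric Set FormalMultilinearSeries

open scoped Nat NNReal

section LeftInverse

variable {𝕜 : Type*} [NontriviallyNormedField 𝕜] {f g : 𝕜 → 𝕜} {U V : Set 𝕜} {w : 𝕜}

theorem HasDerivAt.eq_zero_of_eqOn_zero {u : 𝕜 → 𝕜} {u' : 𝕜} (h : HasDerivAt u u' w)
    (hU : IsOpen U) (hw : w ∈ U) (hu : EqOn u 0 U) : u' = 0 :=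
  h.unique <| (hasDerivAt_const w 0).congr_of_eventuallyEq <|
    Filter.eventually_of_mem (hU.mem_nhds hw) hu

variable [CompleteSpace 𝕜]

theorem AnalyticOnNhd.hasDerivAt_iteratedDeriv (hf : AnalyticOnNhd 𝕜 f U) (hw : w ∈ U) (k : ℕ) :
    HasDerivAt (iteratedDeriv k f) (iteratedDeriv (k + 1) f w) w := by
  rw [iteratedDeriv_succ, iteratedDeriv_eq_iterate]
  exact ((hf.iterated_deriv k) w hw).differentiableAt.hasDerivAt

theorem AnalyticOnNhd.hasDerivAt_iteratedDeriv_comp (hf : AnalyticOnNhd 𝕜 f V)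
    (hg : AnalyticOnNhd 𝕜 g U) (hgV : MapsTo g U V) (hw : w ∈ U) (k : ℕ) :
    HasDerivAt (fun x ↦ iteratedDeriv k f (g x))
      (iteratedDeriv (k + 1) f (g w) * iteratedDeriv 1 g w) w := by
  rw [iteratedDeriv_one]
  exact (hf.hasDerivAt_iteratedDeriv (hgV hw) k).comp w (hg w hw).differentiableAt.hasDerivAt

/-- The `k`-th relation is Faà di Bruno's formula for `(f ∘ g)⁽ᵏ⁾ = id⁽ᵏ⁾`. -/
theorem faaDiBruno_relations_of_leftInvOn (hU : IsOpen U) (hf : AnalyticOnNhd 𝕜 f V)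
    (hg : AnalyticOnNhd 𝕜 g U) (hgV : MapsTo g U V) (hinv : LeftInvOn f g U) (hw : w ∈ U) :
    let F k := iteratedDeriv k f (g w)
    let G k := iteratedDeriv k g w
    F 1 * G 1 = 1 ∧
    F 2 * G 1 ^ 2 + F 1 * G 2 = 0 ∧
    F 3 * G 1 ^ 3 + 3 * F 2 * G 1 * G 2 + F 1 * G 3 = 0 ∧
    F 4 * G 1 ^ 4 + 6 * F 3 * G 1 ^ 2 * G 2 + 3 * F 2 * G 2 ^ 2 + 4 * F 2 * G 1 * G 3
      + F 1 * G 4 = 0 ∧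
    F 5 * G 1 ^ 5 + 10 * F 4 * G 1 ^ 3 * G 2 + 15 * F 3 * G 1 * G 2 ^ 2
      + 10 * F 3 * G 1 ^ 2 * G 3 + 10 * F 2 * G 2 * G 3 + 5 * F 2 * G 1 * G 4 + F 1 * G 5 = 0 := by
  have hF := fun {x} (hx : x ∈ U) ↦ hf.hasDerivAt_iteratedDeriv_comp hg hgV hx
  have hG : ∀ {x}, x ∈ U → ∀ k, HasDerivAt (fun y ↦ iteratedDeriv k g y)
      (iteratedDeriv (k + 1) g x) x := fun hx ↦ hg.hasDerivAt_iteratedDeriv hx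
  have e1 : ∀ x ∈ U, iteratedDeriv 1 f (g x) * iteratedDeriv 1 g x - 1 = 0 := fun x hx ↦
    ((hF hx 0).sub (hasDerivAt_id x)).eq_zero_of_eqOn_zero hU hx fun y hy ↦ by
      simp [hinv hy]
  have e2 : ∀ x ∈ U, iteratedDeriv 2 f (g x) * iteratedDeriv 1 g x ^ 2
      + iteratedDeriv 1 f (g x) * iteratedDeriv 2 g x = 0 := fun x hx ↦ by
    refine (((hF hx 1).mul (hG hx 1)).sub (hasDerivAt_const x 1)).congr_deriv ?_
      |>.eq_zero_of_eqOn_zero hU hx e1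
    ring
  have e3 : ∀ x ∈ U, iteratedDeriv 3 f (g x) * iteratedDeriv 1 g x ^ 3
      + 3 * iteratedDeriv 2 f (g x) * iteratedDeriv 1 g x * iteratedDeriv 2 g x
      + iteratedDeriv 1 f (g x) * iteratedDeriv 3 g x = 0 := fun x hx ↦ by
    refine (((hF hx 2).mul ((hG hx 1).pow 2)).add ((hF hx 1).mul (hG hx 2))).congr_deriv ?_
      |>.eq_zero_of_eqOn_zero hU hx e2
    simp only [Pi.pow_apply]
    ring
  have e4 : ∀ x ∈ U, iteratedDeriv 4 f (g x) * iteratedDeriv 1 g x ^ 4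
      + 6 * iteratedDeriv 3 f (g x) * iteratedDeriv 1 g x ^ 2 * iteratedDeriv 2 g x
      + 3 * iteratedDeriv 2 f (g x) * iteratedDeriv 2 g x ^ 2
      + 4 * iteratedDeriv 2 f (g x) * iteratedDeriv 1 g x * iteratedDeriv 3 g x
      + iteratedDeriv 1 f (g x) * iteratedDeriv 4 g x = 0 := fun x hx ↦ by
    refine ((((hF hx 3).mul ((hG hx 1).pow 3)).add
      ((((hF hx 2).const_mul 3).mul (hG hx 1)).mul (hG hx 2))).add
      ((hF hx 1).mul (hG hx 3))).congr_deriv ?_ |>.eq_zero_of_eqOn_zero hU hx e3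
    simp only [Pi.mul_apply, Pi.pow_apply]
    ring
  refine ⟨sub_eq_zero.mp (e1 w hw), e2 w hw, e3 w hw, e4 w hw, ?_⟩
  refine ((((((hF hw 4).mul ((hG hw 1).pow 4)).add
    ((((hF hw 3).const_mul 6).mul ((hG hw 1).pow 2)).mul (hG hw 2))).add
    (((hF hw 2).const_mul 3).mul ((hG hw 2).pow 2))).add
    ((((hF hw 2).const_mul 4).mul (hG hw 1)).mul (hG hw 3))).add
    ((hF hw 1).mul (hG hw 4))).congr_deriv ?_ |>.eq_zero_of_eqOn_zero hU hw e4
  simp only [Pi.mul_apply, Pi.pow_apply]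
  ring

end LeftInverse

section PowerSeries

variable {𝕜 : Type*} [RCLike 𝕜] {u : 𝕜 → 𝕜} {a : ℕ → 𝕜} {r : ℝ≥0}

theorem hasFPowerSeriesOnBall_ofScalars_of_hasSum (hr : 0 < r)
    (hu : ∀ w ∈ ball (0 : 𝕜) r, HasSum (fun n ↦ a n * w ^ n) (u w)) :
    HasFPowerSeriesOnBall u (ofScalars 𝕜 a) 0 r where
  r_le := by
    refine ENNReal.le_of_forall_nnreal_lt fun s hs ↦ ?_
    have hs' : ((s : ℝ) : 𝕜) ∈ ball (0 : 𝕜) r := by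
      simpa using ENNReal.coe_lt_coe.mp hs
    refine (ofScalars 𝕜 a).le_radius_of_tendsto (l := 0) ?_
    simpa [ofScalars_norm] using (hu _ hs').summable.tendsto_atTop_zero.norm
  r_pos := by simpa using hr
  hasSum {w} hw := by
    simpa [ofScalars_apply_eq, mul_comm] using hu w (by simpa using hw)

theorem HasFPowerSeriesOnBall.iteratedDeriv_ofScalars
    (hu : HasFPowerSeriesOnBall u (ofScalars 𝕜 a) 0 r) (n : ℕ) :
    iteratedDeriv n u 0 = n ! * a n := by
  have h := hu.factorial_smul 1 n
  rw [ofScalars_apply_eq, ← iteratedDeriv_eq_iteratedFDeriv] at h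
  simpa using h.symm

end PowerSeries

theorem inverse_coeffs_of_faaDiBruno_relations {K : Type*} [Field K] [CharZero K]
    {F G c A : ℕ → K} (hF : ∀ k, F (k + 1) = k ! * c k) (hG : ∀ k, G k = k ! * A k)
    (hc0 : c 0 = 1) (e1 : F 1 * G 1 = 1) (e2 : F 2 * G 1 ^ 2 + F 1 * G 2 = 0)
    (e3 : F 3 * G 1 ^ 3 + 3 * F 2 * G 1 * G 2 + F 1 * G 3 = 0)
    (e4 : F 4 * G 1 ^ 4 + 6 * F 3 * G 1 ^ 2 * G 2 + 3 * F 2 * G 2 ^ 2 + 4 * F 2 * G 1 * G 3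
      + F 1 * G 4 = 0)
    (e5 : F 5 * G 1 ^ 5 + 10 * F 4 * G 1 ^ 3 * G 2 + 15 * F 3 * G 1 * G 2 ^ 2
      + 10 * F 3 * G 1 ^ 2 * G 3 + 10 * F 2 * G 2 * G 3 + 5 * F 2 * G 1 * G 4 + F 1 * G 5 = 0) :
    A 2 = -c 1 / 2 ∧ A 3 = c 1 ^ 2 / 2 - c 2 / 3 ∧
    A 4 = -5 * c 1 ^ 3 / 8 + 5 * c 1 * c 2 / 6 - c 3 / 4 ∧
    A 5 = 7 * c 1 ^ 4 / 8 - 7 * c 1 ^ 2 * c 2 / 4 + 3 * c 1 * c 3 / 4 + c 2 ^ 2 / 3 - c 4 / 5 := by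
  norm_num [hF, hG, hc0, Nat.factorial] at e1 e2 e3 e4 e5
  rw [e1] at e2 e3 e4 e5
  have hA2 : A 2 = -c 1 / 2 := by linear_combination e2 / 2
  rw [hA2] at e3 e4 e5
  have hA3 : A 3 = c 1 ^ 2 / 2 - c 2 / 3 := by linear_combination e3 / 6
  rw [hA3] at e4 e5
  have hA4 : A 4 = -5 * c 1 ^ 3 / 8 + 5 * c 1 * c 2 / 6 - c 3 / 4 := by
    linear_combination e4 / 24
  rw [hA4] at e5
  exact ⟨hA2, hA3, hA4, by linear_combination e5 / 120⟩

theorem stmt_2_general (f g : ℂ → ℂ) (c A : ℕ → ℂ)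
    (hf : AnalyticOnNhd ℂ f (ball (0:ℂ) 1))
    (hc0 : c 0 = 1)
    (hfc : ∀ z ∈ ball (0:ℂ) 1, HasSum (fun n => c n * z ^ n) (deriv f z))
    (hA0 : A 0 = 0)
    (hgA : ∀ w : ℂ, ‖w‖ ≤ 1/4 → HasSum (fun n => A n * w ^ n) (g w))
    (hgball : ∀ w : ℂ, ‖w‖ ≤ 1/4 → g w ∈ ball (0:ℂ) 1)
    (hinv : ∀ w : ℂ, ‖w‖ ≤ 1/4 → f (g w) = w) :
    2 * A 2 * A 3 * A 4 - A 3 ^ 3 - A 4 ^ 2 + A 3 * A 5 - A 2 ^ 2 * A 5 =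
      (1 / 8640) * (-540 * c 1 ^ 4 * c 2 - 432 * c 1 ^ 2 * c 4
        + 720 * c 1 ^ 2 * c 2 ^ 2 + 576 * c 2 * c 4 - 540 * c 3 ^ 2
        + 720 * c 1 * c 2 * c 3 + 135 * c 1 ^ 6 - 640 * c 2 ^ 3) := by
  have hU : ∀ w ∈ eball (0 : ℂ) (1 / 4 : ℝ≥0), ‖w‖ ≤ 1 / 4 := fun w hw ↦ by
    rw [eball_coe, mem_ball_zero_iff] at hw
    exact_mod_cast hw.le
  have hgser : HasFPowerSeriesOnBall g (ofScalars ℂ A) 0 (1 / 4 : ℝ≥0) :=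
    hasFPowerSeriesOnBall_ofScalars_of_hasSum (by norm_num) fun w hw ↦
      hgA w (hU w (by rwa [eball_coe]))
  have hfser : HasFPowerSeriesOnBall (deriv f) (ofScalars ℂ c) 0 (1 : ℝ≥0) :=
    hasFPowerSeriesOnBall_ofScalars_of_hasSum one_pos (by simpa using hfc)
  have hg0 : g 0 = 0 := by simpa [hA0] using hgser.iteratedDeriv_ofScalars 0
  have relations := faaDiBruno_relations_of_leftInvOn isOpen_eball hf hgser.analyticOnNhd
    (fun w hw ↦ hgball w (hU w hw)) (fun w hw ↦ hinv w (hU w hw)) (mem_eball_self (by norm_num))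
  rw [hg0] at relations
  obtain ⟨e1, e2, e3, e4, e5⟩ := relations
  obtain ⟨hA2, hA3, hA4, hA5⟩ := inverse_coeffs_of_faaDiBruno_relations
    (F := fun k ↦ iteratedDeriv k f 0) (G := fun k ↦ iteratedDeriv k g 0)
    (fun k ↦ by rw [iteratedDeriv_succ', hfser.iteratedDeriv_ofScalars])
    hgser.iteratedDeriv_ofScalars hc0 e1 e2 e3 e4 e5
  rw [hA2, hA3, hA4, hA5]
  ring

/-- Third Hankel determinant of inverse coefficients of a bounded turning function
in terms of the coefficients of `f'`. -/
theorem stmt_2 (f g : ℂ → ℂ) (c A : ℕ → ℂ)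
    (hf : AnalyticOnNhd ℂ f (ball (0:ℂ) 1))
    (hf0 : f 0 = 0) (hf1 : deriv f 0 = 1) (hc0 : c 0 = 1)
    (hfc : ∀ z ∈ ball (0:ℂ) 1, HasSum (fun n => c n * z ^ n) (deriv f z))
    (hre : ∀ z ∈ ball (0:ℂ) 1, 0 < (deriv f z).re)
    (hA0 : A 0 = 0) (hA1 : A 1 = 1)
    (hgA : ∀ w : ℂ, ‖w‖ ≤ 1/4 → HasSum (fun n => A n * w ^ n) (g w))
    (hgball : ∀ w : ℂ, ‖w‖ ≤ 1/4 → g w ∈ ball (0:ℂ) 1)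
    (hinv : ∀ w : ℂ, ‖w‖ ≤ 1/4 → f (g w) = w) :
    2 * A 2 * A 3 * A 4 - A 3 ^ 3 - A 4 ^ 2 + A 3 * A 5 - A 2 ^ 2 * A 5 =
      (1 / 8640) * (-540 * c 1 ^ 4 * c 2 - 432 * c 1 ^ 2 * c 4
        + 720 * c 1 ^ 2 * c 2 ^ 2 + 576 * c 2 * c 4 - 540 * c 3 ^ 2
        + 720 * c 1 * c 2 * c 3 + 135 * c 1 ^ 6 - 640 * c 2 ^ 3) :=
  stmt_2_general f g c A hf hc0 hfc hA0 hgA hgball hinv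
end

section
/- Define g(s,u) = 208s⁶ + 16u(1−s²)[132s⁴ + 6s²(50−41s²)u + 4(35s⁴−61s²+44)u² + 9s²(1−s²)u³] + 288s(1−s²)(1−u²)[(1−s²)u² + 2(3+s²)u + 3s²] + 144(1−s²)(1−u²)[(1−s²)(15+u²) + 8s²u]. Then g(s,u) ≤ 2816 for all (s,u) ∈ [0,1] × [0,1]. -/
/-!
In the degree-4 Bernstein basis in `u`, `g(s, u)` is a convex combination of five polynomials
in `s`. The last of them is `2816 - 16 s² (111 + 48 s² + 4 s⁴)`, which reaches `2816` only at
`s = 0`; the other four stay below `2600` on `[0, 1]`.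
-/

open Finset unitInterval

theorem sum_bernstein_mul_le {n : ℕ} (x : I) {b : Fin (n + 1) → ℝ} {M : ℝ}
    (hb : ∀ k, b k ≤ M) : ∑ k : Fin (n + 1), bernstein n k x * b k ≤ M :=
  calc ∑ k : Fin (n + 1), bernstein n k x * b k ≤ ∑ k : Fin (n + 1), bernstein n k x * M :=
        sum_le_sum fun k _ => mul_le_mul_of_nonneg_left (hb k) bernstein_nonneg
    _ = M := by rw [← sum_mul, bernstein.probability, one_mul]

noncomputable section

def g (s u : ℝ) : ℝ :=
  208 * s ^ 6
    + 16 * u * (1 - s ^ 2) * (132 * s ^ 4 + 6 * s ^ 2 * (50 - 41 * s ^ 2) * u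
        + 4 * (35 * s ^ 4 - 61 * s ^ 2 + 44) * u ^ 2 + 9 * s ^ 2 * (1 - s ^ 2) * u ^ 3)
    + 288 * s * (1 - s ^ 2) * (1 - u ^ 2) * ((1 - s ^ 2) * u ^ 2
        + 2 * (3 + s ^ 2) * u + 3 * s ^ 2)
    + 144 * (1 - s ^ 2) * (1 - u ^ 2) * ((1 - s ^ 2) * (15 + u ^ 2) + 8 * s ^ 2 * u)

def gBernsteinCoeff (s : ℝ) : Fin 5 → ℝ :=
  ![2160 - 4320 * s ^ 2 + 864 * s ^ 3 + 2160 * s ^ 4 - 864 * s ^ 5 + 208 * s ^ 6,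
    2160 + 432 * s - 4032 * s ^ 2 + 576 * s ^ 3 + 2400 * s ^ 4 - 1008 * s ^ 5 - 320 * s ^ 6,
    1824 + 912 * s - 2272 * s ^ 2 + 48 * s ^ 3 + 848 * s ^ 4 - 960 * s ^ 5 - 192 * s ^ 6,
    1856 + 1008 * s - 1008 * s ^ 2 - 432 * s ^ 3 - 672 * s ^ 4 - 576 * s ^ 5 + 32 * s ^ 6,
    2816 - 1776 * s ^ 2 - 768 * s ^ 4 - 64 * s ^ 6]

theorem g_eq_sum_bernstein (s : ℝ) (u : I) :
    g s u = ∑ k : Fin 5, bernstein 4 k u * gBernsteinCoeff s k := by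
  simp only [g, gBernsteinCoeff, Fin.sum_univ_five, bernstein_apply, Matrix.cons_val]
  norm_num [Nat.choose]
  ring

theorem gBernsteinCoeff_le {s : ℝ} (hs : s ∈ Set.Icc (0 : ℝ) 1) (k : Fin 5) :
    gBernsteinCoeff s k ≤ 2816 := by
  obtain ⟨hs0, hs1⟩ := hs
  have hs2 : s ^ 2 ≤ s := by nlinarith
  have hs3 : s ^ 3 ≤ s ^ 2 := by nlinarith
  have hs4 : s ^ 4 ≤ s ^ 3 := by nlinarith
  have hs5 : s ^ 5 ≤ s ^ 4 := by nlinarith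
  have hs6 : s ^ 6 ≤ s ^ 5 := by nlinarith
  fin_cases k <;> simp only [gBernsteinCoeff, Fin.reduceFinMk, Matrix.cons_val] <;> nlinarith

end

theorem stmt_3 (s u : ℝ) (hs : s ∈ Set.Icc (0:ℝ) 1) (hu : u ∈ Set.Icc (0:ℝ) 1) :
    208 * s ^ 6
      + 16 * u * (1 - s ^ 2) * (132 * s ^ 4 + 6 * s ^ 2 * (50 - 41 * s ^ 2) * u
          + 4 * (35 * s ^ 4 - 61 * s ^ 2 + 44) * u ^ 2 + 9 * s ^ 2 * (1 - s ^ 2) * u ^ 3)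
      + 288 * s * (1 - s ^ 2) * (1 - u ^ 2) * ((1 - s ^ 2) * u ^ 2
          + 2 * (3 + s ^ 2) * u + 3 * s ^ 2)
      + 144 * (1 - s ^ 2) * (1 - u ^ 2) * ((1 - s ^ 2) * (15 + u ^ 2) + 8 * s ^ 2 * u)
    ≤ 2816 := by
  change g s (⟨u, hu⟩ : I) ≤ 2816
  rw [g_eq_sum_bernstein]
  exact sum_bernstein_mul_le _ (gBernsteinCoeff_le hs)
end

section
/- The function f₀(z) = −z + 2·arctanh(z) satisfies f₀'(z) = (1+z²)/(1−z²), belongs to the class 𝓡 of bounded turning functions, and its inverse coefficients satisfy A₂ = A₄ = 0, A₃ = −2/3, A₅ = 14/15, so that |H₃(1)(f₀⁻¹)| = 44/135. -/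
/-!
Since `f₀' = (1 + z²)/(1 - z²)`, the inverse `g` of `f₀` satisfies the differential equation
`(1 + g²) g' = 1 - g²` near `0`. Differentiating it `n` times at `0` by Leibniz's rule expresses
`g⁽ⁿ⁺¹⁾(0)` through lower derivatives, so from `g(0) = 0` one gets successively
`g'(0) = 1`, `g''(0) = 0`, `g'''(0) = -4`, `g⁽⁴⁾(0) = 0`, `g⁽⁵⁾(0) = 112`; finally `Aₙ = g⁽ⁿ⁾(0)/n!`.
-/

open Metric Filter Topology

lemma one_sub_ne_zero_of_norm_lt_one {R : Type*} [NormedRing R] [NormOneClass R] {z : R}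
    (hz : ‖z‖ < 1) : 1 - z ≠ 0 :=
  sub_ne_zero.2 fun h => by simp [← h] at hz

lemma norm_pow_lt_one {R : Type*} [SeminormedRing R] {z : R} (hz : ‖z‖ < 1) {n : ℕ}
    (hn : n ≠ 0) : ‖z ^ n‖ < 1 :=
  (norm_pow_le' z (Nat.pos_of_ne_zero hn)).trans_lt (pow_lt_one₀ (norm_nonneg z) hz hn)

lemma Complex.re_one_add_div_one_sub_pos {u : ℂ} (hu : ‖u‖ < 1) : 0 < ((1 + u) / (1 - u)).re := by
  have hnorm : u.re ^ 2 + u.im ^ 2 < 1 := by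
    have := Complex.sq_norm u
    rw [Complex.normSq_apply] at this
    nlinarith [norm_nonneg u]
  rw [Complex.div_re, ← add_div]
  apply div_pos _ (Complex.normSq_pos.2 (one_sub_ne_zero_of_norm_lt_one hu))
  simp only [Complex.add_re, Complex.sub_re, Complex.one_re, Complex.add_im, Complex.sub_im,
    Complex.one_im]
  nlinarith

lemma Complex.hasDerivAt_log_one_add_div_one_sub {z : ℂ} (hz : ‖z‖ < 1) :
    HasDerivAt (fun z => Complex.log ((1 + z) / (1 - z))) (2 / (1 - z ^ 2)) z := by
  have h1 := one_sub_ne_zero_of_norm_lt_one hz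
  have h2 : 1 + z ≠ 0 := by
    simpa using one_sub_ne_zero_of_norm_lt_one (z := -z) (by simpa)
  have hquot : HasDerivAt (fun z : ℂ => (1 + z) / (1 - z)) (2 / (1 - z) ^ 2) z := by
    refine (((hasDerivAt_id' z).const_add 1).fun_div ((hasDerivAt_id' z).const_sub 1)
      h1).congr_deriv ?_
    field_simp; ring
  have hslit : (1 + z) / (1 - z) ∈ Complex.slitPlane :=
    Or.inl (Complex.re_one_add_div_one_sub_pos hz)
  refine ((Complex.hasDerivAt_log hslit).comp z hquot).congr_deriv ?_
  rw [show (1 : ℂ) - z ^ 2 = (1 + z) * (1 - z) by ring]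
  field_simp

lemma hasDerivAt_neg_add_two_mul_arctanh {z : ℂ} (hz : ‖z‖ < 1) :
    HasDerivAt (fun z : ℂ => -z + 2 * ((1 / 2 : ℂ) * Complex.log ((1 + z) / (1 - z))))
      ((1 + z ^ 2) / (1 - z ^ 2)) z := by
  have h := one_sub_ne_zero_of_norm_lt_one (norm_pow_lt_one hz two_ne_zero)
  refine ((hasDerivAt_neg z).add (((Complex.hasDerivAt_log_one_add_div_one_sub hz).const_mul
    (1 / 2 : ℂ)).const_mul 2)).congr_deriv ?_
  field_simp; ring

lemma HasFPowerSeriesAt.coeff_eq_iteratedDeriv_div {𝕜 : Type*} [NontriviallyNormedField 𝕜]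
    [CompleteSpace 𝕜] [CharZero 𝕜] {f : 𝕜 → 𝕜} {c : ℕ → 𝕜} {x : 𝕜}
    (h : HasFPowerSeriesAt f (FormalMultilinearSeries.ofScalars 𝕜 c) x) (n : ℕ) :
    c n = iteratedDeriv n f x / n.factorial :=
  congrFun (FormalMultilinearSeries.ofScalars_series_injective 𝕜 𝕜
    (h.eq_formalMultilinearSeries h.analyticAt.hasFPowerSeriesAt)) n

lemma hasFPowerSeriesOnBall_ofScalars_of_hasSum_s9 {f : ℂ → ℂ} {c : ℕ → ℂ} {r : NNReal} (hr : 0 < r)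
    (h : ∀ w : ℂ, ‖w‖ ≤ r → HasSum (fun n => c n * w ^ n) (f w)) :
    HasFPowerSeriesOnBall f (FormalMultilinearSeries.ofScalars ℂ c) 0 r where
  r_le := by
    refine FormalMultilinearSeries.le_radius_of_tendsto _ (l := 0) ?_
    simpa [FormalMultilinearSeries.ofScalars_norm] using
      (h r (by simp)).summable.tendsto_atTop_zero.norm
  r_pos := by simpa using hr
  hasSum {w} hw := by
    have hw : ‖w‖ < r := by simpa using hw
    simpa [FormalMultilinearSeries.ofScalars_apply_eq, mul_comm] using h w hw.le

lemma mul_deriv_eq_one_of_leftInverse {𝕜 : Type*} [NontriviallyNormedField 𝕜] {F g : 𝕜 → 𝕜}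
    {F' x : 𝕜} (hF : HasDerivAt F F' (g x)) (hg : DifferentiableAt 𝕜 g x)
    (hinv : ∀ᶠ w in 𝓝 x, F (g w) = w) : F' * deriv g x = 1 :=
  ((hF.comp x hg.hasDerivAt).congr_of_eventuallyEq (hinv.mono fun _ h => h.symm)).unique
    (hasDerivAt_id x)

lemma eventually_ode_of_leftInverse {g : ℂ → ℂ} (hg : AnalyticAt ℂ g 0)
    (hball : ∀ᶠ w in 𝓝 0, ‖g w‖ < 1)
    (hinv : ∀ᶠ w in 𝓝 0, -g w + 2 * ((1 / 2 : ℂ) * Complex.log ((1 + g w) / (1 - g w))) = w) :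
    (fun w => (1 + g w * g w) * deriv g w) =ᶠ[𝓝 0] fun w => 1 - g w * g w := by
  filter_upwards [hg.eventually_analyticAt, hball, hinv.eventually_nhds] with w hgw hw hinvw
  have h := mul_deriv_eq_one_of_leftInverse (hasDerivAt_neg_add_two_mul_arctanh hw)
    hgw.differentiableAt hinvw
  have hne := one_sub_ne_zero_of_norm_lt_one (norm_pow_lt_one hw two_ne_zero)
  field_simp at h
  linear_combination h

attribute [local fun_prop] AnalyticAt.contDiffAt in
lemma iteratedDeriv_at_zero_of_ode {g : ℂ → ℂ} (hg : AnalyticAt ℂ g 0) (hg0 : g 0 = 0)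
    (hode : (fun w => (1 + g w * g w) * deriv g w) =ᶠ[𝓝 0] fun w => 1 - g w * g w) :
    iteratedDeriv 2 g 0 = 0 ∧ iteratedDeriv 3 g 0 = -4 ∧ iteratedDeriv 4 g 0 = 0 ∧
      iteratedDeriv 5 g 0 = 112 := by
  have hg' : AnalyticAt ℂ (deriv g) 0 := hg.deriv
  have e0 := hode.iteratedDeriv_eq 0
  have e1 := hode.iteratedDeriv_eq 1
  have e2 := hode.iteratedDeriv_eq 2
  have e3 := hode.iteratedDeriv_eq 3
  have e4 := hode.iteratedDeriv_eq 4
  simp (discharger := fun_prop) only [iteratedDeriv_fun_add, iteratedDeriv_fun_sub,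
    iteratedDeriv_fun_mul, iteratedDeriv_const, ← iteratedDeriv_succ'] at e0 e1 e2 e3 e4
  simp [Finset.sum_range_succ, hg0, show Nat.choose 4 2 = 6 by rfl] at e0 e1 e2 e3 e4
  have d2 : iteratedDeriv 2 g 0 = 0 := by linear_combination e1
  have d3 : iteratedDeriv 3 g 0 = -4 := by
    rw [e0] at e2; linear_combination e2
  have d4 : iteratedDeriv 4 g 0 = 0 := by
    rw [e0, d2] at e3; linear_combination e3
  refine ⟨d2, d3, d4, ?_⟩
  rw [e0, d2, d3] at e4; linear_combination e4

theorem stmt_9_general (f₀ g : ℂ → ℂ) (A : ℕ → ℂ)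
    (hf₀ : ∀ z : ℂ, f₀ z = -z + 2 * ((1 / 2 : ℂ) * Complex.log ((1 + z) / (1 - z))))
    (hA0 : A 0 = 0)
    (hgA : ∀ w : ℂ, ‖w‖ ≤ 1/4 → HasSum (fun n => A n * w ^ n) (g w))
    (hgball : ∀ w : ℂ, ‖w‖ ≤ 1/4 → g w ∈ ball (0:ℂ) 1)
    (hinv : ∀ w : ℂ, ‖w‖ ≤ 1/4 → f₀ (g w) = w) :
    (∀ z ∈ ball (0:ℂ) 1, deriv f₀ z = (1 + z ^ 2) / (1 - z ^ 2)) ∧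
    (∀ z ∈ ball (0:ℂ) 1, 0 < (deriv f₀ z).re) ∧
    A 2 = 0 ∧ A 3 = -2/3 ∧ A 4 = 0 ∧ A 5 = 14/15 ∧
    ‖(2 * A 2 * A 3 * A 4 - A 3 ^ 3 - A 4 ^ 2 + A 3 * A 5 - A 2 ^ 2 * A 5)‖
      = 44 / 135 := by
  obtain rfl : f₀ = _ := funext hf₀
  have hderiv z (hz : z ∈ ball (0:ℂ) 1) :=
    (hasDerivAt_neg_add_two_mul_arctanh (mem_ball_zero_iff.1 hz)).deriv
  have hS : HasFPowerSeriesOnBall g (FormalMultilinearSeries.ofScalars ℂ A) 0 (1 / 4 : NNReal) :=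
    hasFPowerSeriesOnBall_ofScalars_of_hasSum_s9 (by norm_num) (by exact_mod_cast hgA)
  have hA := hS.hasFPowerSeriesAt.coeff_eq_iteratedDeriv_div
  have hnear : ∀ᶠ w in 𝓝 (0:ℂ), ‖w‖ ≤ 1 / 4 :=
    mem_of_superset (closedBall_mem_nhds 0 (by norm_num)) fun w => mem_closedBall_zero_iff.1
  have hode := eventually_ode_of_leftInverse hS.analyticAt
    (hnear.mono fun w hw => mem_ball_zero_iff.1 (hgball w hw)) (hnear.mono hinv)
  obtain ⟨d2, d3, d4, d5⟩ :=
    iteratedDeriv_at_zero_of_ode hS.analyticAt (by simpa [hA0] using (hA 0).symm) hode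
  have A2 : A 2 = 0 := by simp [hA, d2]
  have A3 : A 3 = -2 / 3 := by norm_num [hA, d3, Nat.factorial]
  have A4 : A 4 = 0 := by simp [hA, d4]
  have A5 : A 5 = 14 / 15 := by norm_num [hA, d5, Nat.factorial]
  refine ⟨hderiv, fun z hz => ?_, A2, A3, A4, A5, ?_⟩
  · rw [hderiv z hz]
    exact Complex.re_one_add_div_one_sub_pos
      (norm_pow_lt_one (mem_ball_zero_iff.1 hz) two_ne_zero)
  · rw [A2, A3, A4, A5]
    norm_num

/-- The extremal function `f₀(z) = -z + 2 arctanh z` for the class of bounded turning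
functions: its derivative, membership in `𝓡`, inverse coefficients and Hankel
determinant value. -/
theorem stmt_9 (f₀ g : ℂ → ℂ) (A : ℕ → ℂ)
    (hf₀ : ∀ z : ℂ, f₀ z = -z + 2 * ((1 / 2 : ℂ) * Complex.log ((1 + z) / (1 - z))))
    (hA0 : A 0 = 0) (hA1 : A 1 = 1)
    (hgA : ∀ w : ℂ, ‖w‖ ≤ 1/4 → HasSum (fun n => A n * w ^ n) (g w))
    (hgball : ∀ w : ℂ, ‖w‖ ≤ 1/4 → g w ∈ ball (0:ℂ) 1)
    (hinv : ∀ w : ℂ, ‖w‖ ≤ 1/4 → f₀ (g w) = w) :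
    (∀ z ∈ ball (0:ℂ) 1, deriv f₀ z = (1 + z ^ 2) / (1 - z ^ 2)) ∧
    (∀ z ∈ ball (0:ℂ) 1, 0 < (deriv f₀ z).re) ∧
    A 2 = 0 ∧ A 3 = -2/3 ∧ A 4 = 0 ∧ A 5 = 14/15 ∧
    ‖(2 * A 2 * A 3 * A 4 - A 3 ^ 3 - A 4 ^ 2 + A 3 * A 5 - A 2 ^ 2 * A 5)‖
      = 44 / 135 :=
  stmt_9_general f₀ g A hf₀ hA0 hgA hgball hinv
end

section
/- Define h(s,u) = 76288s⁶ + 64u(1−s²)[1740s⁴ + 6s²(2986−1447s²)u + 4(1621s⁴−2189s²+1216)u² + 2511s²(1−s²)u³] + 10368(1−s²)(1−u²)[31(1−s²)su² + 2(3+13s²)su + 57s³] + 5184(1−s²)(1−u²)[(1−s²)(31u²+225) + 32s²u]. Then h(s,u) ≤ 1166400 for all (s,u) ∈ [0,1] × [0,1]. -/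
/-!
The odd powers of `s` in `h` are removed by `2su ≤ s² + u²` and `s³ ≤ s²`; this leaves a
polynomial in `t = s²` and `u`, and its gap to `1166400` has nonnegative Bernstein coefficients
of bidegree `(3, 5)` on the unit square. Together this is a single identity expressing
`1166400 - h(s, u)` as a combination of products of `s², 1 - s², 1 - s, u, 1 - u, 1 - u²` and
squares, with nonnegative coefficients.
-/

def hPoly (s u : ℝ) : ℝ :=
  76288 * s ^ 6
    + 64 * u * (1 - s ^ 2) * (1740 * s ^ 4 + 6 * s ^ 2 * (2986 - 1447 * s ^ 2) * u
        + 4 * (1621 * s ^ 4 - 2189 * s ^ 2 + 1216) * u ^ 2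
        + 2511 * s ^ 2 * (1 - s ^ 2) * u ^ 3)
    + 10368 * (1 - s ^ 2) * (1 - u ^ 2) * (31 * (1 - s ^ 2) * s * u ^ 2
        + 2 * (3 + 13 * s ^ 2) * s * u + 57 * s ^ 3)
    + 5184 * (1 - s ^ 2) * (1 - u ^ 2) * ((1 - s ^ 2) * (31 * u ^ 2 + 225)
        + 32 * s ^ 2 * u)

/-- The coefficient of `t^i a^(3-i) u^j b^(5-j)` is `1/64` of the corresponding Bernstein
coefficient of `1166400` minus the even majorant of `hPoly`, times `C(3,i) C(5,j)`;
the last row has collapsed to `17033 t³` because `u + b = 1`. -/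
def bernsteinCert (t a u b : ℝ) : ℝ :=
  a ^ 3 * u ^ 2 * (15228 * b ^ 3 + 38309 * u * b ^ 2 + 33931 * u ^ 2 * b + 13361 * u ^ 3)
    + t * a ^ 2 * (26730 * b ^ 5 + 128547 * u * b ^ 4 + 251328 * u ^ 2 * b ^ 3
        + 251622 * u ^ 3 * b ^ 2 + 132876 * u ^ 4 * b + 33276 * u ^ 5)
    + t ^ 2 * a * (42849 * b ^ 5 + 209913 * u * b ^ 4 + 411162 * u ^ 2 * b ^ 3
        + 402498 * u ^ 3 * b ^ 2 + 199509 * u ^ 4 * b + 41109 * u ^ 5)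
    + 17033 * t ^ 3

lemma bernsteinCert_nonneg {t a u b : ℝ} (ht : 0 ≤ t) (ha : 0 ≤ a) (hu : 0 ≤ u) (hb : 0 ≤ b) :
    0 ≤ bernsteinCert t a u b := by
  unfold bernsteinCert
  positivity

lemma sub_hPoly_eq (s u : ℝ) :
    1166400 - hPoly s u =
      64 * bernsteinCert (s ^ 2) (1 - s ^ 2) u (1 - u)
        + 5184 * (1 - s ^ 2) * (1 - u ^ 2) * (31 * (1 - s ^ 2) * u * (s - u) ^ 2
            + 2 * (3 + 13 * s ^ 2) * (s - u) ^ 2 + 114 * s ^ 2 * (1 - s)) := by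
  unfold hPoly bernsteinCert
  ring

theorem stmt_15 (s u : ℝ) (hs : s ∈ Set.Icc (0:ℝ) 1) (hu : u ∈ Set.Icc (0:ℝ) 1) :
    76288 * s ^ 6
      + 64 * u * (1 - s ^ 2) * (1740 * s ^ 4 + 6 * s ^ 2 * (2986 - 1447 * s ^ 2) * u
          + 4 * (1621 * s ^ 4 - 2189 * s ^ 2 + 1216) * u ^ 2
          + 2511 * s ^ 2 * (1 - s ^ 2) * u ^ 3)
      + 10368 * (1 - s ^ 2) * (1 - u ^ 2) * (31 * (1 - s ^ 2) * s * u ^ 2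
          + 2 * (3 + 13 * s ^ 2) * s * u + 57 * s ^ 3)
      + 5184 * (1 - s ^ 2) * (1 - u ^ 2) * ((1 - s ^ 2) * (31 * u ^ 2 + 225)
          + 32 * s ^ 2 * u)
    ≤ 1166400 := by
  obtain ⟨hs0, hs1⟩ := hs
  obtain ⟨hu0, hu1⟩ := hu
  have h1s : 0 ≤ 1 - s := by linarith
  have h1s2 : 0 ≤ 1 - s ^ 2 := by nlinarith
  have h1u : 0 ≤ 1 - u := by linarith
  have h1u2 : 0 ≤ 1 - u ^ 2 := by nlinarith
  have hcert := bernsteinCert_nonneg (sq_nonneg s) h1s2 hu0 h1u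
  change hPoly s u ≤ 1166400
  rw [← sub_nonneg, sub_hPoly_eq]
  positivity
end
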